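/- Let u be a monomial of degree d in n variables. Then a monomial w of degree d+1 is a gap of u·x_n if and only if w/x_{max(w)} is a gap of u. Consequently, if maxgen(gaps(u)) = Π_{i=1}^n x_i^{k_i}, then maxgen(gaps(u·x_n)) = Π_{j=1}^n x_j^{k_1+...+k_j}. -/

import Mathlib

/-- Lexicographic "strictly greater" on exponent vectors of monomials:
the leftmost nonzero coordinate of `a - b` is positive. -/
def LexGT {n : ℕ} (a b : Fin n → ℕ) : Prop :=
  ∃ i : Fin n, (∀ j : Fin n, j < i → a j = b j) ∧ b i < a i

/-- Lexicographic "greater or equal". -/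
def LexGE {n : ℕ} (a b : Fin n → ℕ) : Prop := LexGT a b ∨ a = b

/-- Total degree of a monomial given by its exponent vector. -/
def deg {n : ℕ} (a : Fin n → ℕ) : ℕ := ∑ i, a i

/-- The lexsegment `L(u)`: all monomials of the same degree that are `≥_lex u`. -/
def Lseg {n : ℕ} (u : Fin n → ℕ) : Set (Fin n → ℕ) :=
  {v | deg v = deg u ∧ LexGE v u}

/-- The half-open lexinterval `L*(u₁,u₂) = {v : u₁ >_lex v ≥_lex u₂}`. -/
def Lstar {n : ℕ} (u₁ u₂ : Fin n → ℕ) : Set (Fin n → ℕ) :=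
  {v | deg v = deg u₁ ∧ LexGT u₁ v ∧ LexGE v u₂}

/-- The elementary Borel move `u ↦ x_i · u / x_j`. -/
def move {n : ℕ} (u : Fin n → ℕ) (i j : Fin n) : Fin n → ℕ :=
  fun k => u k + (if k = i then 1 else 0) - (if k = j then 1 else 0)

/-- A set of monomials is Borel-stable (strongly stable). -/
def BorelStable {n : ℕ} (B : Set (Fin n → ℕ)) : Prop :=
  ∀ u ∈ B, ∀ i j : Fin n, i ≤ j → 1 ≤ u j → move u i j ∈ B

/-- `B(u)`: the smallest Borel-stable set of monomials containing `u`. -/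
def borelSet {n : ℕ} (u : Fin n → ℕ) : Set (Fin n → ℕ) :=
  ⋂₀ {B : Set (Fin n → ℕ) | BorelStable B ∧ u ∈ B}

/-- The gaps of `u`: `L(u) \ B(u)`. -/
def gaps {n : ℕ} (u : Fin n → ℕ) : Set (Fin n → ℕ) := Lseg u \ borelSet u

/-- `max(u)`: the largest (1-based) index of a variable dividing `u` (0 if `u = 1`). -/
def maxIdx {n : ℕ} (u : Fin n → ℕ) : ℕ :=
  (Finset.univ.filter fun i : Fin n => 0 < u i).sup fun i => (i : ℕ) + 1

/-- `min(u)`: the smallest (1-based) index of a variable dividing `u`. -/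
noncomputable def minIdx {n : ℕ} (u : Fin n → ℕ) : ℕ :=
  sInf {m | ∃ i : Fin n, 0 < u i ∧ m = (i : ℕ) + 1}

/-- The maxgen monomial of a set `B` of monomials: its exponent at `i`
is the number of `w ∈ B` with `max(w) = i+1` (1-based). -/
noncomputable def maxgen {n : ℕ} (B : Set (Fin n → ℕ)) : Fin n → ℕ :=
  fun i => (B ∩ {w | maxIdx w = (i : ℕ) + 1}).ncard

/-- `w` is the immediate lexicographic predecessor of `u` among monomials
of the same degree: the least monomial strictly greater than `u`. -/
def IsPred {n : ℕ} (w u : Fin n → ℕ) : Prop :=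
  deg w = deg u ∧ LexGT w u ∧
    ∀ z : Fin n → ℕ, deg z = deg u → LexGT z u → LexGE z w

/-- `w` is the immediate lexicographic successor of `u` among monomials
of the same degree: the greatest monomial strictly smaller than `u`. -/
def IsSucc {n : ℕ} (w u : Fin n → ℕ) : Prop :=
  deg w = deg u ∧ LexGT u w ∧
    ∀ z : Fin n → ℕ, deg z = deg u → LexGT u z → LexGE w z


namespace Stmt18Aux


/-- partial sum of first m coordinates -/
def S {n : ℕ} (a : Fin n → ℕ) (m : ℕ) : ℕ :=
  ∑ i ∈ Finset.univ.filter (fun i : Fin n => (i:ℕ) < m), a i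

lemma S_deg {n : ℕ} (a : Fin n → ℕ) {m : ℕ} (hm : n ≤ m) : S a m = deg a := by
  unfold S deg
  rw [Finset.filter_true_of_mem (fun i _ => lt_of_lt_of_le i.isLt hm)]

lemma S_split {n : ℕ} (a : Fin n → ℕ) {m1 m2 : ℕ} (h : m1 ≤ m2) :
    S a m2 = S a m1 + ∑ i ∈ Finset.univ.filter (fun i : Fin n => m1 ≤ (i:ℕ) ∧ (i:ℕ) < m2), a i := by
  unfold S
  rw [← Finset.sum_filter_add_sum_filter_not (Finset.univ.filter (fun i : Fin n => (i:ℕ) < m2))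
    (fun i => (i:ℕ) < m1)]
  congr 1
  · congr 1
    ext i
    simp only [Finset.mem_filter, Finset.mem_univ, true_and]
    constructor
    · rintro ⟨_, h2⟩; exact h2
    · intro h1; exact ⟨lt_of_lt_of_le h1 h, h1⟩
  · congr 1
    ext i
    simp only [Finset.mem_filter, Finset.mem_univ, true_and]
    omega

lemma S_mono {n : ℕ} (a : Fin n → ℕ) {m1 m2 : ℕ} (h : m1 ≤ m2) : S a m1 ≤ S a m2 := by
  rw [S_split a h]; omega

lemma S_le_deg {n : ℕ} (a : Fin n → ℕ) (m : ℕ) : S a m ≤ deg a := by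
  rcases le_or_gt n m with h | h
  · rw [S_deg a h]
  · rw [← S_deg a (le_refl n)]; exact S_mono a h.le

lemma S_succ {n : ℕ} (a : Fin n → ℕ) {m : ℕ} (hm : m < n) :
    S a (m + 1) = S a m + a ⟨m, hm⟩ := by
  rw [S_split a (Nat.le_succ m)]
  congr 1
  rw [show (Finset.univ.filter (fun i : Fin n => m ≤ (i:ℕ) ∧ (i:ℕ) < m+1)) = {⟨m, hm⟩} from ?_,
    Finset.sum_singleton]
  ext i
  simp only [Finset.mem_filter, Finset.mem_univ, true_and, Finset.mem_singleton]
  constructor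
  · intro hi; exact Fin.ext (show (i:ℕ) = m by omega)
  · rintro rfl; exact ⟨le_refl m, Nat.lt_succ_self m⟩

/-- coordinates from partial sums -/
lemma eq_of_S_eq {n : ℕ} {a b : Fin n → ℕ} (h : ∀ m, S a m = S b m) : a = b := by
  funext k
  have h1 := h (k:ℕ); have h2 := h ((k:ℕ)+1)
  rw [S_succ a k.isLt, S_succ b k.isLt] at h2
  simp only [Fin.eta] at h2
  omega

lemma move_eq {n : ℕ} {a : Fin n → ℕ} {i j : Fin n} (hj : 1 ≤ a j) (k : Fin n) :
    move a i j k + (if k = j then 1 else 0) = a k + (if k = i then 1 else 0) := by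
  unfold move
  by_cases h1 : k = i <;> by_cases h2 : k = j <;> simp_all

lemma S_move {n : ℕ} {a : Fin n → ℕ} {i j : Fin n} (hj : 1 ≤ a j) (m : ℕ) :
    S (move a i j) m + (if (j:ℕ) < m then 1 else 0)
      = S a m + (if (i:ℕ) < m then 1 else 0) := by
  have hind : ∀ c : Fin n, (if (c:ℕ) < m then 1 else 0 : ℕ)
      = ∑ k ∈ Finset.univ.filter (fun k : Fin n => (k:ℕ) < m), (if k = c then 1 else 0) := by
    intro c
    rw [Finset.sum_ite_eq' (Finset.univ.filter (fun k : Fin n => (k:ℕ) < m)) c (fun _ => 1)]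
    simp
  unfold S
  rw [hind j, hind i, ← Finset.sum_add_distrib, ← Finset.sum_add_distrib]
  exact Finset.sum_congr rfl (fun k _ => move_eq hj k)

lemma deg_move {n : ℕ} {a : Fin n → ℕ} {i j : Fin n} (hj : 1 ≤ a j) :
    deg (move a i j) = deg a := by
  have h := S_move (i := i) hj n
  rw [S_deg _ le_rfl, S_deg _ le_rfl, if_pos i.isLt, if_pos j.isLt] at h
  omega

/-- The dominance order characterization set. -/
def Dom {n : ℕ} (u : Fin n → ℕ) : Set (Fin n → ℕ) :=
  {a | deg a = deg u ∧ ∀ m, S u m ≤ S a m}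

lemma dom_stable {n : ℕ} (u : Fin n → ℕ) : BorelStable (Dom u) := by
  rintro a ⟨hdeg, hS⟩ i j hij haj
  refine ⟨by rw [deg_move haj, hdeg], fun m => ?_⟩
  have h := S_move (i := i) haj m
  have hS' := hS m
  have hij' : (i:ℕ) ≤ (j:ℕ) := hij
  split_ifs at h <;> omega

lemma self_mem_borelSet {n : ℕ} (u : Fin n → ℕ) : u ∈ borelSet u :=
  Set.mem_sInter.mpr (fun _ hB => hB.2)

lemma borelSet_subset_dom {n : ℕ} (u : Fin n → ℕ) : borelSet u ⊆ Dom u :=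
  Set.sInter_subset_of_mem ⟨dom_stable u, ⟨rfl, fun _ => le_rfl⟩⟩

lemma borelSet_trans {n : ℕ} {u v : Fin n → ℕ} (h : v ∈ borelSet u) :
    borelSet v ⊆ borelSet u := by
  intro a ha
  unfold borelSet at ha ⊢
  rw [Set.mem_sInter] at ha ⊢
  intro B hB
  exact ha B ⟨hB.1, Set.mem_sInter.mp h B hB⟩

set_option maxHeartbeats 1000000 in

lemma dom_subset_borelSet {n : ℕ} (u : Fin n → ℕ) : Dom u ⊆ borelSet u := by
  suffices h : ∀ N : ℕ, ∀ u a : Fin n → ℕ, a ∈ Dom u →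
      (∑ m ∈ Finset.range (n+1), (S a m - S u m)) < N → a ∈ borelSet u by
    intro a ha
    exact h _ u a ha (Nat.lt_succ_self _)
  intro N
  induction N with
  | zero => intro u a _ h; exact absurd h (Nat.not_lt_zero _)
  | succ N ih =>
    rintro u a ⟨hdeg, hS⟩ hμ
    by_cases hau : a = u
    · subst hau; exact self_mem_borelSet a
    · -- least index where a and u differ
      have hne : (Finset.univ.filter (fun k : Fin n => a k ≠ u k)).Nonempty := by
        rw [Finset.filter_nonempty_iff]
        by_contra h
        push_neg at h
        exact hau (funext fun k => h k (Finset.mem_univ k))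
      set i := (Finset.univ.filter (fun k : Fin n => a k ≠ u k)).min' hne with hi_def
      have hi_mem : a i ≠ u i := by
        have := Finset.min'_mem _ hne
        rw [Finset.mem_filter] at this
        exact this.2
      have hi_min : ∀ k : Fin n, k < i → a k = u k := by
        intro k hk
        by_contra hk'
        exact absurd (Finset.min'_le _ k (Finset.mem_filter.mpr ⟨Finset.mem_univ k, hk'⟩))
          (not_le.mpr hk)
      have hSi : S a (i:ℕ) = S u (i:ℕ) := by
        refine Finset.sum_congr rfl (fun k hk => ?_)
        rw [Finset.mem_filter] at hk
        exact hi_min k (Fin.lt_def.mpr hk.2)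
      have hui : u i < a i := by
        have h1 := hS ((i:ℕ)+1)
        rw [S_succ a i.isLt, S_succ u i.isLt] at h1
        simp only [Fin.eta] at h1
        omega
      -- least index where a < u
      have hne2 : (Finset.univ.filter (fun k : Fin n => a k < u k)).Nonempty := by
        rw [Finset.filter_nonempty_iff]
        by_contra h
        push_neg at h
        have : deg u < deg a :=
          Finset.sum_lt_sum (fun k _ => h k (Finset.mem_univ k))
            ⟨i, Finset.mem_univ i, hui⟩
        omega
      set j := (Finset.univ.filter (fun k : Fin n => a k < u k)).min' hne2 with hj_def
      have hj_mem : a j < u j := by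
        have := Finset.min'_mem _ hne2
        rw [Finset.mem_filter] at this
        exact this.2
      have hj_min : ∀ k : Fin n, k < j → u k ≤ a k := by
        intro k hk
        by_contra hk'
        have hmem : k ∈ Finset.univ.filter (fun k : Fin n => a k < u k) :=
          Finset.mem_filter.mpr ⟨Finset.mem_univ k, not_le.mp hk'⟩
        have h3 : j ≤ k := by rw [hj_def]; exact Finset.min'_le _ k hmem
        exact absurd hk (not_lt.mpr h3)
      have hij : i < j := by
        rcases lt_trichotomy i j with h | h | h
        · exact h
        · exfalso; rw [h] at hui; omega
        · exfalso; have := hi_min j h; omega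
      have huj : 1 ≤ u j := by omega
      have hijv : (i:ℕ) < (j:ℕ) := Fin.lt_def.mp hij
      -- the key partial sum inequality
      have key : ∀ m : ℕ, (i:ℕ) < m → m ≤ (j:ℕ) → S u m + 1 ≤ S a m := by
        intro m h1 h2
        have e1 : S u ((i:ℕ)+1) + 1 ≤ S a ((i:ℕ)+1) := by
          rw [S_succ a i.isLt, S_succ u i.isLt]
          simp only [Fin.eta]
          omega
        have split_a := S_split a (show (i:ℕ)+1 ≤ m from h1)
        have split_u := S_split u (show (i:ℕ)+1 ≤ m from h1)
        have hterm : ∑ k ∈ Finset.univ.filter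
              (fun k : Fin n => (i:ℕ)+1 ≤ (k:ℕ) ∧ (k:ℕ) < m), u k
            ≤ ∑ k ∈ Finset.univ.filter
              (fun k : Fin n => (i:ℕ)+1 ≤ (k:ℕ) ∧ (k:ℕ) < m), a k := by
          refine Finset.sum_le_sum (fun k hk => ?_)
          rw [Finset.mem_filter] at hk
          exact hj_min k (Fin.lt_def.mpr (by omega))
        omega
      set u₁ := move u i j with hu₁_def
      have hu₁_mem : u₁ ∈ borelSet u :=
        Set.mem_sInter.mpr (fun B hB => hB.1 u hB.2 i j (le_of_lt hij) huj)
      have hSu₁ : ∀ m, S u₁ m + (if (j:ℕ) < m then 1 else 0)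
          = S u m + (if (i:ℕ) < m then 1 else 0) := S_move huj
      have hdom₁ : a ∈ Dom u₁ := by
        refine ⟨by rw [deg_move huj, hdeg], fun m => ?_⟩
        have hm := hSu₁ m
        have h0 := hS m
        by_cases h1 : (i:ℕ) < m
        · by_cases h2 : (j:ℕ) < m
          · rw [if_pos h1, if_pos h2] at hm; omega
          · have := key m h1 (not_lt.mp h2)
            rw [if_pos h1, if_neg h2] at hm; omega
        · have h2 : ¬ (j:ℕ) < m := by omega
          rw [if_neg h1, if_neg h2] at hm; omega
      have hμ₁ : (∑ m ∈ Finset.range (n+1), (S a m - S u₁ m))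
          < ∑ m ∈ Finset.range (n+1), (S a m - S u m) := by
        refine Finset.sum_lt_sum (fun m _ => ?_) ⟨(i:ℕ)+1, Finset.mem_range.mpr (by
          have := i.isLt; omega), ?_⟩
        · have hm := hSu₁ m
          refine Nat.sub_le_sub_left ?_ (S a m)
          split_ifs at hm <;> omega
        · have hm := hSu₁ ((i:ℕ)+1)
          rw [if_neg (by omega), if_pos (by omega)] at hm
          have := key ((i:ℕ)+1) (by omega) (by omega)
          have h0 := hdom₁.2 ((i:ℕ)+1)
          omega
      exact borelSet_trans hu₁_mem (ih u₁ a hdom₁ (by omega))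

lemma borelSet_eq_dom {n : ℕ} (u : Fin n → ℕ) : borelSet u = Dom u :=
  le_antisymm (borelSet_subset_dom u) (dom_subset_borelSet u)

lemma lexGT_irrefl {n : ℕ} (a : Fin n → ℕ) : ¬ LexGT a a := by
  rintro ⟨i, _, h⟩; omega

lemma lexGT_asymm {n : ℕ} {a b : Fin n → ℕ} (h1 : LexGT a b) (h2 : LexGT b a) : False := by
  obtain ⟨i, hi1, hi2⟩ := h1
  obtain ⟨i', hi'1, hi'2⟩ := h2
  rcases lt_trichotomy i i' with h | h | h
  · have := hi'1 i h; omega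
  · subst h; omega
  · have := hi1 i' h; omega

lemma lexGT_total {n : ℕ} {a b : Fin n → ℕ} (h : a ≠ b) : LexGT a b ∨ LexGT b a := by
  have hne : (Finset.univ.filter (fun k : Fin n => a k ≠ b k)).Nonempty := by
    rw [Finset.filter_nonempty_iff]
    by_contra hc; push_neg at hc
    exact h (funext fun k => hc k (Finset.mem_univ k))
  set i := (Finset.univ.filter (fun k : Fin n => a k ≠ b k)).min' hne with hi_def
  have hmem : a i ≠ b i := by
    have := Finset.min'_mem _ hne
    rw [Finset.mem_filter] at this
    exact this.2
  have hmin : ∀ k : Fin n, k < i → a k = b k := by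
    intro k hk
    by_contra hk'
    have hm : k ∈ Finset.univ.filter (fun k : Fin n => a k ≠ b k) :=
      Finset.mem_filter.mpr ⟨Finset.mem_univ k, hk'⟩
    have h3 : i ≤ k := by rw [hi_def]; exact Finset.min'_le _ k hm
    exact absurd hk (not_lt.mpr h3)
  rcases lt_or_gt_of_ne hmem with h' | h'
  · right; exact ⟨i, fun j hj => (hmin j hj).symm, h'⟩
  · left; exact ⟨i, hmin, h'⟩

lemma maxIdx_le_n {n : ℕ} (w : Fin n → ℕ) : maxIdx w ≤ n :=
  Finset.sup_le (fun i _ => i.isLt)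

lemma le_maxIdx {n : ℕ} {w : Fin n → ℕ} {k : Fin n} (h : 0 < w k) : (k:ℕ)+1 ≤ maxIdx w := by
  unfold maxIdx
  exact Finset.le_sup (f := fun i : Fin n => (i:ℕ)+1)
    (Finset.mem_filter.mpr ⟨Finset.mem_univ k, h⟩)

lemma maxIdx_attained {n : ℕ} {w : Fin n → ℕ} (h : 0 < deg w) :
    ∃ i : Fin n, (i:ℕ)+1 = maxIdx w ∧ 0 < w i := by
  have hne : (Finset.univ.filter (fun k : Fin n => 0 < w k)).Nonempty := by
    rw [Finset.filter_nonempty_iff]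
    by_contra hc; push_neg at hc
    have : deg w = 0 := Finset.sum_eq_zero (fun k hk => Nat.le_zero.mp (hc k hk))
    omega
  obtain ⟨i, hi, hsup⟩ := Finset.exists_mem_eq_sup _ hne (fun i : Fin n => (i:ℕ)+1)
  rw [Finset.mem_filter] at hi
  exact ⟨i, hsup.symm, hi.2⟩

lemma sum_ind {n : ℕ} (c : Fin n) (m : ℕ) :
    (if (c:ℕ) < m then (1:ℕ) else 0)
      = ∑ k ∈ Finset.univ.filter (fun k : Fin n => (k:ℕ) < m), (if k = c then 1 else 0) := by
  rw [Finset.sum_ite_eq' (Finset.univ.filter (fun k : Fin n => (k:ℕ) < m)) c (fun _ => 1)]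
  simp

lemma deg_add_single {n : ℕ} (a : Fin n → ℕ) (i : Fin n) :
    deg (a + Pi.single i 1) = deg a + 1 := by
  unfold deg
  simp only [Pi.add_apply]
  rw [Finset.sum_add_distrib]
  congr 1
  simp [Pi.single_apply]

lemma S_add_single {n : ℕ} (a : Fin n → ℕ) (i : Fin n) (m : ℕ) :
    S (a + Pi.single i 1) m = S a m + (if (i:ℕ) < m then 1 else 0) := by
  unfold S
  rw [sum_ind i m, ← Finset.sum_add_distrib]
  exact Finset.sum_congr rfl (fun k _ => by simp [Pi.single_apply])

lemma central {n d : ℕ} (hn : 0 < n) (u : Fin n → ℕ) (hu : deg u = d)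
    (w w' : Fin n → ℕ) (hw : deg w = d + 1) (i₀ : Fin n)
    (hmax : ∀ k : Fin n, 0 < w k → (k:ℕ) ≤ (i₀:ℕ)) (hw0 : 0 < w i₀)
    (hrel : w = w' + Pi.single i₀ 1) :
    (w ∈ gaps (u + Pi.single (⟨n - 1, by omega⟩ : Fin n) 1) ↔ w' ∈ gaps u) := by
  set last : Fin n := ⟨n - 1, by omega⟩ with hlast_def
  set v := u + Pi.single last 1 with hv_def
  have hlastv : (last:ℕ) = n - 1 := rfl
  have hi₀n : (i₀:ℕ) ≤ n - 1 := by have := i₀.isLt; omega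
  have hdegv : deg v = d + 1 := by rw [hv_def, deg_add_single, hu]
  have hdegw' : deg w' = d := by
    have := deg_add_single w' i₀
    rw [← hrel, hw] at this
    omega
  have hv_app : ∀ k : Fin n, v k = u k + (if k = last then 1 else 0) := by
    intro k; rw [hv_def]; simp [Pi.single_apply]
  have hw_app : ∀ k : Fin n, w k = w' k + (if k = i₀ then 1 else 0) := by
    intro k; rw [hrel]; simp [Pi.single_apply]
  have hwzero : ∀ k : Fin n, (i₀:ℕ) < (k:ℕ) → w k = 0 := by
    intro k hk
    by_contra h'
    exact absurd (hmax k (Nat.pos_of_ne_zero h')) (by omega)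
  have hSw : ∀ m, S w m = S w' m + (if (i₀:ℕ) < m then 1 else 0) := by
    intro m; rw [hrel]; exact S_add_single w' i₀ m
  have hSv : ∀ m, S v m = S u m + (if (n-1:ℕ) < m then 1 else 0) := by
    intro m; rw [hv_def]
    have := S_add_single u last m
    rwa [hlastv] at this
  have Sw_high : ∀ m, (i₀:ℕ) < m → S w m = d + 1 := by
    intro m hm
    rcases le_or_gt n m with h | h
    · rw [S_deg w h, hw]
    · have hsp := S_split w h.le
      rw [S_deg w le_rfl, hw] at hsp
      have hz : ∑ k ∈ Finset.univ.filter
          (fun k : Fin n => m ≤ (k:ℕ) ∧ (k:ℕ) < n), w k = 0 := by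
        refine Finset.sum_eq_zero (fun k hk => ?_)
        rw [Finset.mem_filter] at hk
        exact hwzero k (by omega)
      omega
  -- Lex equivalence
  have hLex : LexGE w v ↔ LexGE w' u := by
    constructor
    · intro hwv
      by_cases heq : w' = u
      · right; exact heq
      · rcases lexGT_total heq with hgt | hgt
        · left; exact hgt
        · exfalso
          obtain ⟨p, hp1, hp2⟩ := hgt
          have hpi : (p:ℕ) < (i₀:ℕ) := by
            by_contra hc
            push_neg at hc
            have hzero : ∑ k ∈ Finset.univ.filter
                (fun k : Fin n => (p:ℕ)+1 ≤ (k:ℕ) ∧ (k:ℕ) < n), w' k = 0 := by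
              refine Finset.sum_eq_zero (fun k hk => ?_)
              rw [Finset.mem_filter] at hk
              have h0 : w k = 0 := hwzero k (by omega)
              have := hw_app k
              omega
            have hsp := S_split w' (show (p:ℕ)+1 ≤ n from p.isLt)
            rw [S_deg w' le_rfl] at hsp
            have hSp : S w' (p:ℕ) = S u (p:ℕ) := by
              refine Finset.sum_congr rfl (fun k hk => ?_)
              rw [Finset.mem_filter] at hk
              exact (hp1 k (Fin.lt_def.mpr hk.2)).symm
            have h1 := S_succ w' p.isLt
            have h2 := S_succ u p.isLt
            have h3 : S u ((p:ℕ)+1) ≤ deg u := S_le_deg u _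
            simp only [Fin.eta] at h1 h2
            omega
          have hvw : LexGT v w := by
            refine ⟨p, fun j hj => ?_, ?_⟩
            · have hjv : (j:ℕ) < (p:ℕ) := Fin.lt_def.mp hj
              have e1 := hv_app j
              have e2 := hw_app j
              have e3 := hp1 j hj
              rw [if_neg (Fin.ne_of_val_ne (show (j:ℕ) ≠ (last:ℕ) by omega))] at e1
              rw [if_neg (Fin.ne_of_val_ne (show (j:ℕ) ≠ (i₀:ℕ) by omega))] at e2
              omega
            · have e1 := hv_app p
              have e2 := hw_app p
              rw [if_neg (Fin.ne_of_val_ne (show (p:ℕ) ≠ (last:ℕ) by omega))] at e1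
              rw [if_neg (Fin.ne_of_val_ne (show (p:ℕ) ≠ (i₀:ℕ) by omega))] at e2
              omega
          rcases hwv with hgt' | heq'
          · exact lexGT_asymm hgt' hvw
          · rw [heq'] at hvw; exact lexGT_irrefl v hvw
    · intro h
      rcases h with hgt | heq
      · obtain ⟨p, hp1, hp2⟩ := hgt
        left
        have hpi : (p:ℕ) ≤ (i₀:ℕ) := by
          have e2 := hw_app p
          have hpos : 0 < w p := by
            by_cases hp : p = i₀
            · rw [hp]; exact hw0
            · rw [if_neg hp] at e2; omega
          exact hmax p hpos
        refine ⟨p, fun j hj => ?_, ?_⟩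
        · have hjv : (j:ℕ) < (p:ℕ) := Fin.lt_def.mp hj
          have e1 := hv_app j
          have e2 := hw_app j
          have e3 := hp1 j hj
          rw [if_neg (Fin.ne_of_val_ne (show (j:ℕ) ≠ (last:ℕ) by omega))] at e1
          rw [if_neg (Fin.ne_of_val_ne (show (j:ℕ) ≠ (i₀:ℕ) by omega))] at e2
          omega
        · have e1 := hv_app p
          have e2 := hw_app p
          by_cases hp : p = i₀
          · rw [if_pos hp] at e2
            by_cases hpl : p = last
            · rw [if_pos hpl] at e1; omega
            · rw [if_neg hpl] at e1; omega
          · have hpv : (p:ℕ) < (i₀:ℕ) := lt_of_le_of_ne hpi (Fin.val_ne_of_ne hp)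
            rw [if_neg (Fin.ne_of_val_ne (show (p:ℕ) ≠ (last:ℕ) by omega))] at e1
            rw [if_neg hp] at e2
            omega
      · by_cases hil : i₀ = last
        · right
          funext k
          have e1 := hv_app k
          have e2 := hw_app k
          have e3 : w' k = u k := congrFun heq k
          by_cases hk : k = i₀
          · rw [if_pos hk] at e2; rw [if_pos (by rw [hk, hil])] at e1; omega
          · rw [if_neg hk] at e2
            rw [if_neg (by rw [← hil]; exact hk)] at e1
            omega
        · left
          have hiv : (i₀:ℕ) < (last:ℕ) :=
            lt_of_le_of_ne (by omega) (Fin.val_ne_of_ne hil)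
          refine ⟨i₀, fun j hj => ?_, ?_⟩
          · have hjv : (j:ℕ) < (i₀:ℕ) := Fin.lt_def.mp hj
            have e1 := hv_app j
            have e2 := hw_app j
            have e3 : w' j = u j := congrFun heq j
            rw [if_neg (Fin.ne_of_val_ne (show (j:ℕ) ≠ (last:ℕ) by omega))] at e1
            rw [if_neg (Fin.ne_of_val_ne (show (j:ℕ) ≠ (i₀:ℕ) by omega))] at e2
            omega
          · have e1 := hv_app i₀
            have e2 := hw_app i₀
            have e3 : w' i₀ = u i₀ := congrFun heq i₀
            rw [if_neg hil] at e1
            rw [if_pos rfl] at e2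
            omega
  -- Borel equivalence
  have hBor : w ∈ borelSet v ↔ w' ∈ borelSet u := by
    rw [borelSet_eq_dom, borelSet_eq_dom]
    constructor
    · rintro ⟨_, hS⟩
      refine ⟨by rw [hdegw', hu], fun m => ?_⟩
      rcases le_or_gt m (i₀:ℕ) with h | h
      · have h2 := hS m
        rw [hSv m, hSw m, if_neg (by omega), if_neg (by omega)] at h2
        omega
      · have h1 := Sw_high m h
        rw [hSw m, if_pos h] at h1
        have h2 : S u m ≤ d := hu ▸ S_le_deg u m
        omega
    · rintro ⟨_, hS⟩
      refine ⟨by rw [hw, hdegv], fun m => ?_⟩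
      have h0 := hS m
      have hle : (if (n-1:ℕ) < m then (1:ℕ) else 0) ≤ (if (i₀:ℕ) < m then 1 else 0) := by
        split_ifs <;> omega
      rw [hSv m, hSw m]
      omega
  -- combine
  show w ∈ gaps v ↔ w' ∈ gaps u
  unfold gaps Lseg
  simp only [Set.mem_diff, Set.mem_setOf_eq]
  rw [hdegv, hw, hdegw', hu]
  constructor
  · rintro ⟨⟨_, hL⟩, hB⟩
    exact ⟨⟨rfl, hLex.mp hL⟩, fun hb => hB (hBor.mpr hb)⟩
  · rintro ⟨⟨_, hL⟩, hB⟩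
    exact ⟨⟨rfl, hLex.mpr hL⟩, fun hb => hB (hBor.mp hb)⟩

lemma maxIdx_le {n : ℕ} {w : Fin n → ℕ} {b : ℕ} (h : ∀ k : Fin n, 0 < w k → (k:ℕ)+1 ≤ b) :
    maxIdx w ≤ b := by
  unfold maxIdx
  refine Finset.sup_le (fun k hk => ?_)
  rw [Finset.mem_filter] at hk
  exact h k hk.2

lemma gaps_finite {n d : ℕ} (u : Fin n → ℕ) (hu : deg u = d) : (gaps u).Finite := by
  apply Set.Finite.subset
    (Set.Finite.pi (fun _ : Fin n => Set.finite_Iic d) :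
      (Set.pi Set.univ fun _ : Fin n => Set.Iic d).Finite)
  intro a ha
  rw [Set.mem_pi]
  intro k _
  have hd : deg a = d := by rw [ha.1.1, hu]
  have hk : a k ≤ deg a :=
    Finset.single_le_sum (f := fun i => a i) (fun i _ => Nat.zero_le _) (Finset.mem_univ k)
  simp only [Set.mem_Iic]
  omega

lemma gaps_zero {n : ℕ} (u : Fin n → ℕ) (hu : deg u = 0) : gaps u = ∅ := by
  ext a
  simp only [Set.mem_empty_iff_false, iff_false]
  rintro ⟨⟨hda, _⟩, hB⟩
  have hau : a = u := by
    funext k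
    have h1 : deg a = 0 := by rw [hda, hu]
    have h2 : a k = 0 := (Finset.sum_eq_zero_iff.mp h1) k (Finset.mem_univ k)
    have h3 : u k = 0 := (Finset.sum_eq_zero_iff.mp hu) k (Finset.mem_univ k)
    omega
  exact hB (hau ▸ self_mem_borelSet u)

end Stmt18Aux

open Stmt18Aux

/-- `w` (of degree `d+1`) is a gap of `u·x_n` iff `w/x_{max(w)}` is a gap
of `u`; consequently if `maxgen(gaps(u)) = Π x_i^{k_i}` then
`maxgen(gaps(u·x_n)) = Π_j x_j^{k_1+⋯+k_j}`. -/
theorem stmt18 {n d : ℕ} (hn : 0 < n) (u : Fin n → ℕ) (hu : deg u = d) :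
    (∀ w : Fin n → ℕ, deg w = d + 1 →
      (w ∈ gaps (u + Pi.single (⟨n - 1, by omega⟩ : Fin n) 1) ↔
        (fun k : Fin n => if (k : ℕ) + 1 = maxIdx w then w k - 1 else w k) ∈ gaps u))
    ∧ (∀ j : Fin n,
        maxgen (gaps (u + Pi.single (⟨n - 1, by omega⟩ : Fin n) 1)) j
          = ∑ i ∈ Finset.univ.filter (fun i : Fin n => i ≤ j), maxgen (gaps u) i) := by
  classical
  set last : Fin n := ⟨n - 1, by omega⟩ with hlast_def
  set v := u + Pi.single last 1 with hv_def
  have part1 : ∀ w : Fin n → ℕ, deg w = d + 1 →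
      (w ∈ gaps v ↔
        (fun k : Fin n => if (k : ℕ) + 1 = maxIdx w then w k - 1 else w k) ∈ gaps u) := by
    intro w hw
    obtain ⟨i₀, hi₀, hpos⟩ := maxIdx_attained (w := w) (by omega)
    have hfun : (fun k : Fin n => if (k:ℕ)+1 = maxIdx w then w k - 1 else w k)
        = fun k : Fin n => if k = i₀ then w k - 1 else w k := by
      funext k
      by_cases h : k = i₀
      · rw [if_pos (by rw [h, hi₀]), if_pos h]
      · rw [if_neg (fun hc : (k:ℕ)+1 = maxIdx w => h (Fin.ext (by omega))), if_neg h]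
    rw [hfun]
    refine central hn u hu w _ hw i₀ ?_ hpos ?_
    · intro k hk; have := le_maxIdx hk; omega
    · funext k
      simp only [Pi.add_apply, Pi.single_apply]
      by_cases h : k = i₀
      · rw [if_pos h, if_pos h]
        subst h
        omega
      · rw [if_neg h, if_neg h]
        omega
  refine ⟨part1, ?_⟩
  intro j
  have hfin : (gaps u).Finite := gaps_finite u hu
  have hdegv : deg v = d + 1 := by rw [hv_def, deg_add_single, hu]
  have happ : ∀ (a : Fin n → ℕ) (k : Fin n),
      (a + Pi.single j 1 : Fin n → ℕ) k = a k + (if k = j then 1 else 0) := by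
    intro a k
    simp [Pi.single_apply]
  have himage : gaps v ∩ {w | maxIdx w = (j:ℕ)+1}
      = (fun w' : Fin n → ℕ => w' + Pi.single j 1) ''
        (gaps u ∩ {w' | maxIdx w' ≤ (j:ℕ)+1}) := by
    ext w
    simp only [Set.mem_inter_iff, Set.mem_setOf_eq, Set.mem_image]
    constructor
    · rintro ⟨hwg, hwm⟩
      have hdw : deg w = d + 1 := by rw [hwg.1.1, hdegv]
      obtain ⟨i₀, hi₀, hpos⟩ := maxIdx_attained (w := w) (by omega)
      have hij : i₀ = j := Fin.ext (by omega)
      refine ⟨(fun k => if (k:ℕ)+1 = maxIdx w then w k - 1 else w k),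
        ⟨(part1 w hdw).mp hwg, ?_⟩, ?_⟩
      · apply maxIdx_le
        intro k hk
        have hk' : 0 < (if (k:ℕ)+1 = maxIdx w then w k - 1 else w k) := hk
        have hposk : 0 < w k := by
          by_cases h : (k:ℕ)+1 = maxIdx w
          · rw [if_pos h] at hk'; omega
          · rw [if_neg h] at hk'; omega
        have := le_maxIdx hposk
        omega
      · funext k
        rw [happ]
        by_cases h : k = j
        · rw [if_pos h, if_pos (show (k:ℕ)+1 = maxIdx w by rw [hwm]; rw [h])]
          have hposj : 0 < w k := by rw [h, ← hij]; exact hpos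
          omega
        · rw [if_neg h, if_neg (fun hc : (k:ℕ)+1 = maxIdx w => h (Fin.ext (by omega)))]
          omega
    · rintro ⟨w', ⟨hw'g, hw'm⟩, rfl⟩
      have hdw' : deg w' = d := by rw [hw'g.1.1, hu]
      have hdw : deg (w' + Pi.single j 1 : Fin n → ℕ) = d + 1 := by
        rw [deg_add_single, hdw']
      have hmaxw : maxIdx (w' + Pi.single j 1 : Fin n → ℕ) = (j:ℕ)+1 := by
        apply le_antisymm
        · apply maxIdx_le
          intro k hk
          rw [happ] at hk
          by_cases h : k = j
          · have : (k:ℕ) = (j:ℕ) := by rw [h]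
            omega
          · rw [if_neg h] at hk
            have := le_maxIdx (w := w') (k := k) (by omega)
            omega
        · exact le_maxIdx (k := j) (by rw [happ w' j, if_pos rfl]; omega)
      refine ⟨?_, hmaxw⟩
      rw [part1 _ hdw]
      have heqfun : (fun k : Fin n => if (k:ℕ)+1 = maxIdx (w' + Pi.single j 1 : Fin n → ℕ)
          then (w' + Pi.single j 1 : Fin n → ℕ) k - 1
          else (w' + Pi.single j 1 : Fin n → ℕ) k) = w' := by
        funext k
        rw [hmaxw, happ]
        by_cases h : k = j
        · rw [if_pos (show (k:ℕ)+1 = (j:ℕ)+1 by rw [h]), if_pos h]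
          omega
        · rw [if_neg (fun hc : (k:ℕ)+1 = (j:ℕ)+1 => h (Fin.ext (by omega))), if_neg h]
          omega
      rw [heqfun]
      exact hw'g
  have hinj : Function.Injective (fun w' : Fin n → ℕ => w' + Pi.single j 1) :=
    add_left_injective _
  have hkey : maxgen (gaps v) j = (gaps u ∩ {w' | maxIdx w' ≤ (j:ℕ)+1}).ncard := by
    show (gaps v ∩ {w | maxIdx w = (j:ℕ)+1}).ncard = _
    rw [himage, Set.ncard_image_of_injective _ hinj]
  rw [hkey]
  rcases Nat.eq_zero_or_pos d with hd0 | hd0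
  · have hgu : gaps u = ∅ := gaps_zero u (by rw [hu, hd0])
    simp [maxgen, hgu]
  · set G := hfin.toFinset with hG_def
    have hset : ∀ (P : (Fin n → ℕ) → Prop) [DecidablePred P],
        gaps u ∩ {w | P w} = ↑(G.filter P) := by
      intro P _
      ext a
      simp only [Set.mem_inter_iff, Set.mem_setOf_eq, Finset.coe_filter,
        Set.Finite.mem_toFinset, hG_def]
    have hmaxgen : ∀ i : Fin n,
        maxgen (gaps u) i = (G.filter (fun w => maxIdx w = (i:ℕ)+1)).card := by
      intro i
      show (gaps u ∩ {w | maxIdx w = (i:ℕ)+1}).ncard = _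
      rw [hset _, Set.ncard_coe_finset]
    rw [hset _, Set.ncard_coe_finset]
    have hmem1 : ∀ w ∈ G, 1 ≤ maxIdx w := by
      intro w hwG
      rw [hG_def, Set.Finite.mem_toFinset] at hwG
      have hdw : deg w = d := by rw [hwG.1.1, hu]
      obtain ⟨i₀, hi₀, _⟩ := maxIdx_attained (w := w) (by omega)
      omega
    rw [Finset.card_eq_sum_card_fiberwise
      (f := fun w => (⟨maxIdx w - 1, by have := maxIdx_le_n w; omega⟩ : Fin n))
      (t := Finset.univ.filter (fun i : Fin n => i ≤ j)) ?_]
    · apply Finset.sum_congr rfl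
      intro i hi
      rw [Finset.mem_filter] at hi
      rw [hmaxgen i]
      congr 1
      ext w
      simp only [Finset.mem_filter]
      constructor
      · rintro ⟨⟨hwG, hle⟩, hfib⟩
        have h1 := hmem1 w hwG
        have h2 : maxIdx w - 1 = (i:ℕ) := congrArg Fin.val hfib
        exact ⟨hwG, by omega⟩
      · rintro ⟨hwG, heq⟩
        have hij : (i:ℕ) ≤ (j:ℕ) := hi.2
        refine ⟨⟨hwG, by omega⟩, ?_⟩
        apply Fin.ext
        show maxIdx w - 1 = (i:ℕ)
        omega
    · intro w hw
      rw [Finset.mem_coe, Finset.mem_filter] at hw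
      rw [Finset.mem_coe, Finset.mem_filter]
      refine ⟨Finset.mem_univ _, ?_⟩
      rw [Fin.le_def]
      have := hmem1 w hw.1
      have h2 := hw.2
      show maxIdx w - 1 ≤ (j:ℕ)
      omega
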